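/- arXiv:chao-dyn/9912016 — 6 statements merged into one kernel-verified Lean document; each statement's English description precedes it below -/
import Mathlib

section
/- For a Levy stable random vector X on R^d with rescaling maps a(n), the maps form a multiplicative semigroup: for all positive integers m, n, a(m·n) = a(m)·a(n). -/
/-!
Split `m * n` i.i.d. copies of `X` into `n` blocks of `m`. Each block sum is distributed as
`a m X + γ m`, so the total is distributed as the sum of `n` i.i.d. copies of that, i.e. as
`a m (a n X + γ n) + n γ m`. Comparing with `a (m n) X + γ (m n)`, uniqueness of the affine
normalization gives `a (m n) = a m a n`.
-/

open MeasureTheory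

section SumLaw

variable {E : Type*} [AddCommMonoid E] [MeasurableSpace E] [MeasurableAdd₂ E]
  {ι κ : Type*} [Fintype ι] [Fintype κ]

noncomputable def sumLaw (μ : Measure E) (ι : Type*) [Fintype ι] : Measure E :=
  (Measure.pi fun _ : ι => μ).map fun f => ∑ i, f i

variable (μ : Measure E)

theorem sumLaw_congr [SigmaFinite μ] (e : ι ≃ κ) : sumLaw μ κ = sumLaw μ ι := by
  rw [sumLaw, ← (measurePreserving_piCongrLeft (fun _ : κ => μ) e).map_eq,
    Measure.map_map (by fun_prop) (by fun_prop)]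
  congr with f
  simp [← e.sum_comp, MeasurableEquiv.coe_piCongrLeft, Equiv.piCongrLeft_apply_apply]

variable [IsProbabilityMeasure μ]

instance isProbabilityMeasure_sumLaw : IsProbabilityMeasure (sumLaw μ ι) :=
  Measure.isProbabilityMeasure_map (by fun_prop)

theorem sumLaw_prod : sumLaw μ (ι × κ) = sumLaw (sumLaw μ κ) ι := by
  have hcurry : (Measure.pi fun _ : ι × κ => μ).map (MeasurableEquiv.curry ι κ E)
      = Measure.pi fun _ : ι => Measure.pi fun _ : κ => μ := by
    simpa only [Measure.infinitePi_eq_pi] using Measure.infinitePi_map_curry fun (_ : ι) (_ : κ) => μ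
  rw [sumLaw, sumLaw, sumLaw, ← Measure.pi_map_pi (fun _ => by fun_prop), ← hcurry,
    Measure.map_map (by fun_prop) (by fun_prop), Measure.map_map (by fun_prop) (by fun_prop)]
  congr with f
  simp [Fintype.sum_prod_type]

theorem sumLaw_map_add_const {F G : Type*} [AddCommMonoid F] [MeasurableSpace F] [MeasurableAdd₂ F]
    [FunLike G E F] [AddMonoidHomClass G E F] (A : G) (hA : Measurable A) (c : F) :
    sumLaw (μ.map fun x => A x + c) ι = (sumLaw μ ι).map fun x => A x + Fintype.card ι • c := by
  rw [sumLaw, sumLaw, ← Measure.pi_map_pi (fun _ => by fun_prop),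
    Measure.map_map (by fun_prop) (by fun_prop), Measure.map_map (by fun_prop) (by fun_prop)]
  congr with f
  simp [Finset.sum_add_distrib, map_sum]

end SumLaw

/-- For a Lévy stable random vector `X` on `ℝ^d` (distribution `μ`) with
rescaling maps `a n` and recentring vectors `γ n` — i.e. the sum of `n` i.i.d. copies of `X`
equals in distribution `a n • X + γ n` — and with affine normalizations uniquely determined
by `μ`, the rescaling maps form a multiplicative semigroup: `a (m * n) = a m * a n`. -/
theorem levy_stable_rescaling_semigroup {d : ℕ}
    (μ : Measure (EuclideanSpace ℝ (Fin d))) [IsProbabilityMeasure μ]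
    (a : ℕ → (EuclideanSpace ℝ (Fin d) →L[ℝ] EuclideanSpace ℝ (Fin d)))
    (γ : ℕ → EuclideanSpace ℝ (Fin d))
    (hstable : ∀ n : ℕ, 1 ≤ n →
      Measure.map (fun f : Fin n → EuclideanSpace ℝ (Fin d) => ∑ i, f i)
          (Measure.pi fun _ => μ)
        = Measure.map (fun x => a n x + γ n) μ)
    (huniq : ∀ (A B : EuclideanSpace ℝ (Fin d) →L[ℝ] EuclideanSpace ℝ (Fin d))
        (c e : EuclideanSpace ℝ (Fin d)),
      Measure.map (fun x => A x + c) μ = Measure.map (fun x => B x + e) μ → A = B ∧ c = e) :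
    ∀ m n : ℕ, 1 ≤ m → 1 ≤ n → a (m * n) = a m * a n := by
  have hlaw : ∀ n, 1 ≤ n → sumLaw μ (Fin n) = μ.map fun x => a n x + γ n := hstable
  intro m n hm hn
  have hblocks : sumLaw μ (Fin (m * n)) = μ.map fun x => (a m * a n) x + (a m (γ n) + n • γ m) :=
    calc sumLaw μ (Fin (m * n))
      _ = sumLaw (sumLaw μ (Fin m)) (Fin n) := by
        rw [← sumLaw_prod, sumLaw_congr μ ((finCongr (mul_comm m n)).trans finProdFinEquiv.symm)]
      _ = (sumLaw μ (Fin n)).map fun x => a m x + n • γ m := by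
        rw [hlaw m hm, sumLaw_map_add_const μ _ (a m).measurable, Fintype.card_fin]
      _ = μ.map fun x => (a m * a n) x + (a m (γ n) + n • γ m) := by
        rw [hlaw n hn, Measure.map_map (by fun_prop) (by fun_prop)]
        refine congrArg (Measure.map · μ) (funext fun x => ?_)
        simp [add_assoc]
  exact (huniq _ _ _ _ ((hlaw _ (Nat.mul_pos hm hn)).symm.trans hblocks)).1
end

section
/- If X is a Levy stable vector with rescaling group a(n) = n^{α⁻¹} (generator α⁻¹) and 1 ∉ Spec(α), then there exists b ∈ R^d such that X − b is strictly stable with the same generator, i.e., sums of n i.i.d. copies of X − b equal in distribution n^{α⁻¹}·(X − b). -/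
open MeasureTheory Matrix
open NormedSpace (exp)
open scoped Complex

/-!
Write `C n = n - n^{α⁻¹}`. Symmetrising the consistency relation in `m` and `n` gives
`C m γ n = C n γ m`, and the `C n` commute; so once a single `C p` is invertible,
`b = (C p)⁻¹ γ p` satisfies `γ n = C n b` for all `n`, which is exactly the recentring that
makes `X - b` strictly stable. `C p` is singular only if `α⁻¹` has a complex eigenvalue `μ`
with `p^μ = p`, i.e. `μ ∈ 1 + 2πiℤ / log p`. As `1 ∉ Spec(α)` and `log p / log q` is irrational
for distinct primes, each eigenvalue blocks at most one prime, so some prime `p` works.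
-/

theorem Matrix.mem_spectrum_map_iff {n K L : Type*} [Fintype n] [DecidableEq n] [Field K]
    [Field L] (f : K →+* L) (A : Matrix n n K) (r : K) :
    f r ∈ spectrum L (A.map f) ↔ r ∈ spectrum K A := by
  simp only [mem_spectrum_iff_isRoot_charpoly, charpoly_map, Polynomial.isRoot_map_iff f.injective]

theorem Matrix.inv_mem_spectrum_of_mem_spectrum_nonsing_inv {n K : Type*} [Fintype n]
    [DecidableEq n] [Field K] {A : Matrix n n K} {r : K} (hr : r ≠ 0) (h : r ∈ spectrum K A⁻¹) :
    r⁻¹ ∈ spectrum K A := by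
  by_cases hA : IsUnit A
  · lift r to Kˣ using hr.isUnit
    lift A to (Matrix n n K)ˣ using hA
    rw [← coe_units_inv] at h
    rw [← Units.val_inv_eq_inv_val, spectrum.inv_mem_iff, inv_inv]
    exact h
  · rw [nonsing_inv_apply_not_isUnit A (by rwa [← isUnit_iff_isUnit_det]), spectrum.mem_iff,
      sub_zero] at h
    exact absurd (hr.isUnit.map _) h

theorem Int.eq_zero_of_mul_log_eq_mul_log {p q : ℕ} (hp : p.Prime) (hq : q.Prime) (hpq : p ≠ q)
    {k l : ℤ} (h : k * Real.log p = l * Real.log q) : k = 0 := by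
  have hpos : ∀ {r : ℕ}, r.Prime → (0 : ℝ) < r := fun hr => by exact_mod_cast hr.pos
  have hpow : ((p : ℚ) ^ k : ℚ) = (q : ℚ) ^ l := by
    have : (p : ℝ) ^ k = (q : ℝ) ^ l :=
      Real.log_injOn_pos (zpow_pos (hpos hp) k) (zpow_pos (hpos hq) l)
        (by rw [Real.log_zpow, Real.log_zpow, h])
    exact Rat.cast_injective (α := ℝ) (by push_cast; exact this)
  have : Fact p.Prime := ⟨hp⟩
  have : Fact q.Prime := ⟨hq⟩
  simpa [padicValRat.of_nat, padicValNat_primes hpq] using congrArg (padicValRat p) hpow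

theorem Complex.eq_one_of_cexp_mul_log_eq {p q : ℕ} (hp : p.Prime) (hq : q.Prime) (hpq : p ≠ q)
    {μ : ℂ} (hμp : cexp (μ * Real.log p) = p) (hμq : cexp (μ * Real.log q) = q) : μ = 1 := by
  have hperiod : ∀ {r : ℕ}, r.Prime → cexp (μ * Real.log r) = r →
      ∃ k : ℤ, (μ - 1) * Real.log r = k * (2 * Real.pi * I) := fun {r} hr h => by
    rw [← exp_log (Nat.cast_ne_zero.mpr hr.ne_zero), ← ofReal_natCast,
      ← ofReal_log (Nat.cast_nonneg _), exp_eq_exp_iff_exists_int] at h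
    obtain ⟨k, hk⟩ := h
    exact ⟨k, by rw [sub_mul, hk]; ring⟩
  obtain ⟨k, hk⟩ := hperiod hp hμp
  obtain ⟨l, hl⟩ := hperiod hq hμq
  have hlogq : (Real.log q : ℂ) ≠ 0 :=
    ofReal_ne_zero.mpr (Real.log_pos (by exact_mod_cast hq.one_lt)).ne'
  have hrel : (l : ℝ) * Real.log p = k * Real.log q := by
    have : ((l : ℂ) * Real.log p) * (2 * Real.pi * I)
        = ((k : ℂ) * Real.log q) * (2 * Real.pi * I) := by
      linear_combination (Real.log q : ℂ) * hk - (Real.log p : ℂ) * hl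
    exact_mod_cast mul_right_cancel₀ two_pi_I_ne_zero this
  rw [Int.eq_zero_of_mul_log_eq_mul_log hp hq hpq hrel, Int.cast_zero, zero_mul] at hl
  exact sub_eq_zero.mp ((mul_eq_zero.mp hl).resolve_right hlogq)

theorem Module.End.exists_hasEigenvector_of_commute {K V : Type*} [Field K] [IsAlgClosed K]
    [AddCommGroup V] [Module K V] [FiniteDimensional K V] {f g : Module.End K V}
    (hfg : Commute f g) {μ : K} (hμ : f.HasEigenvalue μ) :
    ∃ ν v, g.HasEigenvector ν v ∧ f v = μ • v := by
  have hmaps := Module.End.mapsTo_genEigenspace_of_comm hfg μ 1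
  have : Nontrivial (f.eigenspace μ) := Submodule.nontrivial_iff_ne_bot.mpr hμ
  obtain ⟨ν, hν⟩ := Module.End.exists_eigenvalue (g.restrict hmaps)
  obtain ⟨v, hv, hv0⟩ := hν.exists_hasEigenvector
  refine ⟨ν, v, ⟨?_, by simpa using hv0⟩, Module.End.mem_eigenspace_iff.mp v.2⟩
  rw [Module.End.mem_eigenspace_iff] at hv ⊢
  exact congrArg Subtype.val hv

section MatrixExp

variable {ι 𝕂 : Type*} [Fintype ι] [DecidableEq ι] [RCLike 𝕂]

attribute [local instance] Matrix.linftyOpNormedRing Matrix.linftyOpNormedAlgebra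

theorem Matrix.exp_mulVec_of_mulVec_eq_smul {M : Matrix ι ι 𝕂} {ν : 𝕂} {w : ι → 𝕂}
    (h : M *ᵥ w = ν • w) : exp M *ᵥ w = exp ν • w := by
  have hpow : ∀ k : ℕ, M ^ k *ᵥ w = ν ^ k • w := by
    intro k
    induction k with
    | zero => simp
    | succ k ih => rw [pow_succ, ← mulVec_mulVec, h, mulVec_smul, ih, smul_smul, pow_succ']
  have hM : HasSum (fun k : ℕ => ((k.factorial : 𝕂)⁻¹ • M ^ k) *ᵥ w) (exp M *ᵥ w) :=
    (NormedSpace.exp_series_hasSum_exp' (𝕂 := 𝕂) M).map (mulVec.addMonoidHomLeft w)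
      (continuous_id.matrix_mulVec continuous_const)
  refine hM.unique ?_
  simpa [smul_mulVec, hpow, smul_smul] using
    (NormedSpace.exp_series_hasSum_exp' (𝕂 := 𝕂) ν).smul_const w

theorem Matrix.exists_mem_spectrum_cexp_eq {M : Matrix ι ι ℂ} {c : ℂ}
    (hc : c ∈ spectrum ℂ (exp M)) : ∃ ν ∈ spectrum ℂ M, cexp ν = c := by
  rw [← spectrum_toLin', ← Module.End.hasEigenvalue_iff_mem_spectrum] at hc
  obtain ⟨ν, v, hv, hcv⟩ := Module.End.exists_hasEigenvector_of_commute
    ((Commute.refl M).exp_left.map (toLinAlgEquiv' (R := ℂ))) hc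
  refine ⟨ν, ?_, ?_⟩
  · rw [← spectrum_toLin']
    exact (Module.End.hasEigenvalue_of_hasEigenvector hv).mem_spectrum
  have hMv : M *ᵥ v = ν • v := by simpa using hv.apply_eq_smul
  have := exp_mulVec_of_mulVec_eq_smul hMv
  rw [← Complex.exp_eq_exp_ℂ] at this
  exact smul_left_injective ℂ hv.2 (this.symm.trans (by simpa using hcv))

theorem Matrix.exp_map_algebraMap (A : Matrix ι ι ℝ) :
    exp (A.map (algebraMap ℝ 𝕂)) = (exp A).map (algebraMap ℝ 𝕂) :=
  (NormedSpace.map_exp (algebraMap ℝ 𝕂).mapMatrix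
    (continuous_id.matrix_map (continuous_algebraMap ℝ 𝕂)) A).symm

theorem Matrix.exists_mem_spectrum_map_cexp_mul_eq {B : Matrix ι ι ℝ} {t c : ℝ} (ht : t ≠ 0)
    (hc : c ∈ spectrum ℝ (exp (t • B))) :
    ∃ μ ∈ spectrum ℂ (B.map (algebraMap ℝ ℂ)), cexp (μ * t) = c := by
  rw [← mem_spectrum_map_iff (algebraMap ℝ ℂ), ← exp_map_algebraMap,
    show (t • B).map (algebraMap ℝ ℂ) = (t : ℂ) • B.map (algebraMap ℝ ℂ) by ext; simp] at hc
  obtain ⟨ν, hν, hνc⟩ := exists_mem_spectrum_cexp_eq hc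
  rw [show (t : ℂ) • B.map (algebraMap ℝ ℂ) = Units.mk0 (t : ℂ) (mod_cast ht) • B.map _ from rfl,
    spectrum.unit_smul_eq_smul] at hν
  obtain ⟨μ, hμ, rfl⟩ := Set.mem_smul_set.mp hν
  exact ⟨μ, hμ, by simpa [mul_comm] using hνc⟩

theorem Matrix.exists_prime_natCast_notMem_spectrum_exp_log_smul {B : Matrix ι ι ℝ}
    (hB : 1 ∉ spectrum ℝ B) : ∃ p : ℕ, p.Prime ∧ (p : ℝ) ∉ spectrum ℝ (exp (Real.log p • B)) := by
  by_contra! h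
  choose μ hμ hμp using fun p : Nat.Primes =>
    exists_mem_spectrum_map_cexp_mul_eq (Real.log_pos (mod_cast p.2.one_lt)).ne' (h p p.2)
  refine not_injective_infinite_finite
    (fun p => (⟨μ p, hμ p⟩ : spectrum ℂ (B.map (algebraMap ℝ ℂ)))) fun p q hpq => ?_
  by_contra hne
  have hμpq : μ p = μ q := congrArg Subtype.val hpq
  have hμ1 : μ p = 1 := Complex.eq_one_of_cexp_mul_log_eq p.2 q.2 (hne <| Subtype.ext ·)
    (by simpa using hμp p) (by simpa [hμpq] using hμp q)
  apply hB
  rw [← mem_spectrum_map_iff (algebraMap ℝ ℂ), map_one, ← hμ1]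
  exact hμ p

end MatrixExp

theorem Matrix.exists_eq_natCast_smul_sub_mulVec {ι R : Type*} [Fintype ι] [DecidableEq ι]
    [CommRing R] {A : ℕ → Matrix ι ι R} {γ : ℕ → ι → R} (hA : ∀ m n, Commute (A m) (A n))
    (hγ : ∀ m n : ℕ, 1 ≤ m → 1 ≤ n → γ (m * n) = A n *ᵥ γ m + (m : R) • γ n)
    {n₀ : ℕ} (hn₀ : 1 ≤ n₀) (hσ : (n₀ : R) ∉ spectrum R (A n₀)) :
    ∃ b, ∀ n, 1 ≤ n → γ n = (n : R) • b - A n *ᵥ b := by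
  set C : ℕ → Matrix ι ι R := fun n => algebraMap R _ n - A n
  have hC : ∀ n v, C n *ᵥ v = (n : R) • v - A n *ᵥ v := fun n v => by
    simp [C, sub_mulVec]
  have hCcomm : ∀ m n, Commute (C m) (C n) := fun m n =>
    (Algebra.commute_algebraMap_left _ _).sub_left
      ((Algebra.commute_algebraMap_right _ _).sub_right (hA m n))
  have hCγ : ∀ m n, 1 ≤ m → 1 ≤ n → C m *ᵥ γ n = C n *ᵥ γ m := fun m n hm hn => by
    have h := (hγ m n hm hn).symm.trans (mul_comm m n ▸ hγ n m hn hm)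
    rw [hC, hC, sub_eq_sub_iff_add_eq_add]
    simpa [add_comm] using h
  obtain ⟨u, hu⟩ := spectrum.notMem_iff.mp hσ
  have hCu : C n₀ = u := hu.symm
  have hCinj : Function.Injective (C n₀ *ᵥ ·) := fun x y h => by
    simpa [mulVec_mulVec, hCu] using congrArg (u.inv *ᵥ ·) h
  obtain ⟨b, hb⟩ : ∃ b, C n₀ *ᵥ b = γ n₀ :=
    ⟨u.inv *ᵥ γ n₀, by rw [hCu, mulVec_mulVec, u.val_inv, one_mulVec]⟩
  refine ⟨b, fun n hn => hCinj ?_⟩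
  calc C n₀ *ᵥ γ n = C n *ᵥ (C n₀ *ᵥ b) := by rw [hCγ n₀ n hn₀ hn, hb]
    _ = C n₀ *ᵥ (C n *ᵥ b) := by rw [mulVec_mulVec, mulVec_mulVec, (hCcomm n n₀).eq]
    _ = C n₀ *ᵥ ((n : R) • b - A n *ᵥ b) := by rw [hC n b]

theorem map_sum_pi_map_sub_const {E : Type*} [MeasurableSpace E] [AddCommGroup E]
    [MeasurableAdd₂ E] [MeasurableSub E] (μ : Measure E) [IsFiniteMeasure μ] (b : E) (n : ℕ) :
    (Measure.pi fun _ : Fin n => μ.map (· - b)).map (fun f => ∑ i, f i)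
      = ((Measure.pi fun _ : Fin n => μ).map (fun f => ∑ i, f i)).map (· - n • b) := by
  rw [← Measure.pi_map_pi fun _ => (measurable_sub_const b).aemeasurable,
    Measure.map_map (by fun_prop) (by fun_prop), Measure.map_map (by fun_prop) (by fun_prop)]
  congr 1
  funext f
  simp [Finset.sum_sub_distrib]

theorem levy_stable_reduction_to_strict_general {d : ℕ}
    (μ : Measure (Fin d → ℝ)) [IsProbabilityMeasure μ]
    (α : Matrix (Fin d) (Fin d) ℝ)
    (γ : ℕ → Fin d → ℝ)
    (hstable : ∀ n : ℕ, 1 ≤ n →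
      Measure.map (fun f : Fin n → Fin d → ℝ => ∑ i, f i) (Measure.pi fun _ => μ)
        = Measure.map
            (fun x => (NormedSpace.exp (Real.log n • α⁻¹)).mulVec x + γ n) μ)
    (hγ : ∀ m n : ℕ, 1 ≤ m → 1 ≤ n →
      γ (m * n) = (NormedSpace.exp (Real.log n • α⁻¹)).mulVec (γ m) + (m : ℝ) • γ n)
    (hspec : (1 : ℂ) ∉ spectrum ℂ (α.map (algebraMap ℝ ℂ))) :
    ∃ b : Fin d → ℝ, ∀ n : ℕ, 1 ≤ n →
      Measure.map (fun f : Fin n → Fin d → ℝ => ∑ i, f i)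
          (Measure.pi fun _ => Measure.map (fun x => x - b) μ)
        = Measure.map (fun x => (NormedSpace.exp (Real.log n • α⁻¹)).mulVec x)
            (Measure.map (fun x => x - b) μ) := by
  have hσ : (1 : ℝ) ∉ spectrum ℝ α⁻¹ := fun h => hspec <| by
    simpa using (mem_spectrum_map_iff (algebraMap ℝ ℂ) α 1).mpr
      (by simpa using inv_mem_spectrum_of_mem_spectrum_nonsing_inv one_ne_zero h)
  obtain ⟨p, hp, hpσ⟩ := exists_prime_natCast_notMem_spectrum_exp_log_smul hσ
  obtain ⟨b, hb⟩ := exists_eq_natCast_smul_sub_mulVec (A := fun n => exp (Real.log n • α⁻¹))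
    (fun m n => (((Commute.refl α⁻¹).smul_left _).smul_right _).exp) hγ hp.one_lt.le hpσ
  refine ⟨b, fun n hn => ?_⟩
  rw [map_sum_pi_map_sub_const, hstable n hn, Measure.map_map (by fun_prop) (by fun_prop),
    Measure.map_map (by fun_prop) (by fun_prop)]
  congr 1
  funext x
  simp only [Function.comp_apply, hb n hn, mulVec_sub, ← Nat.cast_smul_eq_nsmul ℝ]
  abel

/-- If `X` (with distribution `μ`) is a Lévy stable vector whose rescaling
group is `a n = n^{α⁻¹} = exp((log n) • α⁻¹)` for an invertible linear map `α` with
`1 ∉ Spec(α)` (complex eigenvalues), and the recentring vectors satisfy the consistency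
relation `γ (m*n) = a n (γ m) + m • γ n`, then there exists `b` such that `X - b` is strictly
stable with the same generator: sums of `n` i.i.d. copies of `X - b` equal in distribution
`n^{α⁻¹} (X - b)`. -/
theorem levy_stable_reduction_to_strict {d : ℕ}
    (μ : Measure (Fin d → ℝ)) [IsProbabilityMeasure μ]
    (α : Matrix (Fin d) (Fin d) ℝ) (hα : IsUnit α)
    (γ : ℕ → Fin d → ℝ)
    (hstable : ∀ n : ℕ, 1 ≤ n →
      Measure.map (fun f : Fin n → Fin d → ℝ => ∑ i, f i) (Measure.pi fun _ => μ)
        = Measure.map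
            (fun x => (NormedSpace.exp (Real.log n • α⁻¹)).mulVec x + γ n) μ)
    (hγ : ∀ m n : ℕ, 1 ≤ m → 1 ≤ n →
      γ (m * n) = (NormedSpace.exp (Real.log n • α⁻¹)).mulVec (γ m) + (m : ℝ) • γ n)
    (hspec : (1 : ℂ) ∉ spectrum ℂ (α.map (algebraMap ℝ ℂ))) :
    ∃ b : Fin d → ℝ, ∀ n : ℕ, 1 ≤ n →
      Measure.map (fun f : Fin n → Fin d → ℝ => ∑ i, f i)
          (Measure.pi fun _ => Measure.map (fun x => x - b) μ)
        = Measure.map (fun x => (NormedSpace.exp (Real.log n • α⁻¹)).mulVec x)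
            (Measure.map (fun x => x - b) μ) :=
  levy_stable_reduction_to_strict_general μ α γ hstable hγ hspec
end

section
/- Let A be a positive-definite symmetric matrix on R^d and G a matrix with dilation group T_λ = λ^G. If the symmetric matrix A·G + G*·A is positive semidefinite, then the family of ellipsoidal balls B_λ = {x : ⟨x, A_λ x⟩ ≤ 1}, where A_λ = (T_λ⁻¹)* A T_λ⁻¹, is increasing in λ: λ' ≤ λ implies B_{λ'} ⊆ B_λ. -/
/-!
With `E t = exp (t • G)`, the quadratic form `t ↦ ⟪x, (E t)ᵀ A (E t) x⟫` has derivative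
`⟪E t x, (A G + Gᵀ A) E t x⟫ ≥ 0`, so it is monotone. The ball `B_λ` is the sublevel set of
this form at `t = -log λ`, which decreases as `λ` increases.
-/

open Matrix

section

attribute [local instance] Matrix.linftyOpNormedRing Matrix.linftyOpNormedAlgebra

variable {n : Type*} [Fintype n] [DecidableEq n]

theorem hasDerivAt_transpose_exp_smul_mul_mul_exp_smul (A G : Matrix n n ℝ) (t : ℝ) :
    HasDerivAt (fun s : ℝ => (NormedSpace.exp (s • G))ᵀ * A * NormedSpace.exp (s • G))
      ((NormedSpace.exp (t • G))ᵀ * (A * G + Gᵀ * A) * NormedSpace.exp (t • G)) t := by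
  have hE := hasDerivAt_exp_smul_const' (𝕂 := ℝ) G t
  have hT : HasDerivAt (fun s : ℝ => (NormedSpace.exp (s • G))ᵀ)
      (G * NormedSpace.exp (t • G))ᵀ t :=
    (transposeLinearEquiv n n ℝ ℝ).toLinearMap.toContinuousLinearMap.hasFDerivAt.comp_hasDerivAt
      t hE
  refine ((hT.mul_const A).mul hE).congr_deriv ?_
  rw [transpose_mul, add_comm]
  noncomm_ring

theorem HasDerivAt.dotProduct_mulVec {M : ℝ → Matrix n n ℝ} {M' : Matrix n n ℝ} {t : ℝ}
    (hM : HasDerivAt M M' t) (x y : n → ℝ) :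
    HasDerivAt (fun s => x ⬝ᵥ M s *ᵥ y) (x ⬝ᵥ M' *ᵥ y) t :=
  let L : Matrix n n ℝ →ₗ[ℝ] ℝ := dotProductBilin ℝ ℝ x ∘ₗ (mulVecBilin ℝ ℝ).flip y
  L.toContinuousLinearMap.hasFDerivAt.comp_hasDerivAt t hM

end

theorem monotone_dotProduct_transpose_exp_smul_mul_mul_exp_smul_mulVec {n : Type*} [Fintype n]
    [DecidableEq n] {A G : Matrix n n ℝ} (hpos : (A * G + Gᵀ * A).PosSemidef) (x : n → ℝ) :
    Monotone fun t : ℝ =>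
      x ⬝ᵥ ((NormedSpace.exp (t • G))ᵀ * A * NormedSpace.exp (t • G)) *ᵥ x := by
  refine monotone_of_hasDerivAt_nonneg
    (fun t => (hasDerivAt_transpose_exp_smul_mul_mul_exp_smul A G t).dotProduct_mulVec x x)
    fun t => ?_
  simpa [conjTranspose_eq_transpose_of_trivial] using
    (hpos.conjTranspose_mul_mul_same (NormedSpace.exp (t • G))).dotProduct_mulVec_nonneg x

theorem ellipsoid_balls_increasing_of_posSemidef_general {d : ℕ}
    (A G : Matrix (Fin d) (Fin d) ℝ)
    (hpos : (A * G + Gᵀ * A).PosSemidef) :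
    ∀ l l' : ℝ, 0 < l' → l' ≤ l →
      {x : Fin d → ℝ |
          x ⬝ᵥ (((NormedSpace.exp (Real.log l' • (-G)))ᵀ * A *
            NormedSpace.exp (Real.log l' • (-G))).mulVec x) ≤ 1}
        ⊆ {x : Fin d → ℝ |
          x ⬝ᵥ (((NormedSpace.exp (Real.log l • (-G)))ᵀ * A *
            NormedSpace.exp (Real.log l • (-G))).mulVec x) ≤ 1} := by
  intro l l' hl' hle x hx
  have hlog : -Real.log l ≤ -Real.log l' := neg_le_neg (Real.log_le_log hl' hle)
  simp only [smul_neg, ← neg_smul] at hx ⊢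
  exact (monotone_dotProduct_transpose_exp_smul_mul_mul_exp_smul_mulVec hpos x hlog).trans hx

/-- Let `A` be positive-definite symmetric and `G` a matrix with dilation
group `T_λ = λ^G`. If `A G + Gᵀ A` is positive semidefinite, then the ellipsoidal balls
`B_λ = {x : ⟨x, A_λ x⟩ ≤ 1}` with `A_λ = (T_λ⁻¹)ᵀ A T_λ⁻¹` are increasing in `λ`. -/
theorem ellipsoid_balls_increasing_of_posSemidef {d : ℕ}
    (A G : Matrix (Fin d) (Fin d) ℝ)
    (hAsym : Aᵀ = A) (hA : A.PosDef)
    (hpos : (A * G + Gᵀ * A).PosSemidef) :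
    ∀ l l' : ℝ, 0 < l' → l' ≤ l →
      {x : Fin d → ℝ |
          x ⬝ᵥ (((NormedSpace.exp (Real.log l' • (-G)))ᵀ * A *
            NormedSpace.exp (Real.log l' • (-G))).mulVec x) ≤ 1}
        ⊆ {x : Fin d → ℝ |
          x ⬝ᵥ (((NormedSpace.exp (Real.log l • (-G)))ᵀ * A *
            NormedSpace.exp (Real.log l • (-G))).mulVec x) ≤ 1} :=
  ellipsoid_balls_increasing_of_posSemidef_general A G hpos
end

section
/- Conversely, if the ellipsoidal balls B_λ = {x : ⟨x, A_λ x⟩ ≤ 1} with A_λ = (T_λ⁻¹)* A T_λ⁻¹ are increasing in λ for the dilation group T_λ = λ^G, then sym(A·G) = (A G + G* A)/2 is positive semidefinite. -/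
/-!
Write `E t = exp (-t G)`, so that `B_λ` is the unit sublevel set of the quadratic form
`q_t x = ⟪E t x, A E t x⟫` with `t = log λ`. For quadratic forms, an inclusion of unit
sublevel sets `{q ≤ 1} ⊆ {p ≤ 1}` forces `p x ≤ q x` wherever `q x ≥ 0` (rescale `x`).
Comparing `B_1 ⊆ B_{e^t}` therefore gives `q_t x ≤ q_0 x` for `t ≥ 0`, so `t = 0` is a
one-sided maximum of `t ↦ q_t x` and its derivative `-⟪x, (A G + Gᵀ A) x⟫` there is `≤ 0`.
-/
open Matrix Set

theorem HasDerivAt.nonpos_of_isMaxOn_Ici {f : ℝ → ℝ} {f' a : ℝ} (hf : HasDerivAt f f' a)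
    (hmax : IsMaxOn f (Ici a) a) : f' ≤ 0 := by
  have hone : (1 : ℝ) ∈ posTangentConeAt (Ici a) a :=
    mem_posTangentConeAt_of_segment_subset <| by
      rw [segment_eq_Icc (by linarith)]
      exact Icc_subset_Ici_self
  simpa using hmax.localize.hasFDerivWithinAt_nonpos hf.hasDerivWithinAt.hasFDerivWithinAt hone

namespace QuadraticMap

theorem le_of_setOf_le_one_subset {M : Type*} [AddCommGroup M] [Module ℝ M]
    {Q P : QuadraticMap ℝ M ℝ} (hQP : {x | Q x ≤ 1} ⊆ {x | P x ≤ 1}) {x : M}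
    (hx : 0 ≤ Q x) : P x ≤ Q x := by
  by_contra! hlt
  have hsum : 0 < Q x + P x := by linarith
  set s : ℝ := √(2 / (Q x + P x))
  have hs : s * s = 2 / (Q x + P x) := Real.mul_self_sqrt (by positivity)
  have hQ : Q (s • x) ≤ 1 := by
    rw [QuadraticMap.map_smul, hs, smul_eq_mul, div_mul_eq_mul_div, div_le_one hsum]
    linarith
  have hP : P (s • x) ≤ 1 := hQP hQ
  rw [QuadraticMap.map_smul, hs, smul_eq_mul, div_mul_eq_mul_div, div_le_one hsum] at hP
  linarith

end QuadraticMap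

namespace Matrix

variable {n : Type*} [Fintype n]

theorem dotProduct_mulVec_le_of_setOf_subset {P Q : Matrix n n ℝ}
    (hQP : {x | x ⬝ᵥ Q *ᵥ x ≤ 1} ⊆ {x | x ⬝ᵥ P *ᵥ x ≤ 1}) {x : n → ℝ}
    (hx : 0 ≤ x ⬝ᵥ Q *ᵥ x) : x ⬝ᵥ P *ᵥ x ≤ x ⬝ᵥ Q *ᵥ x := by
  classical
  have h (M : Matrix n n ℝ) (y : n → ℝ) : M.toQuadraticForm' y = y ⬝ᵥ M *ᵥ y :=
    toLinearMap₂'_apply' M y y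
  simp only [← h] at hQP hx ⊢
  exact QuadraticMap.le_of_setOf_le_one_subset hQP hx

theorem hasDerivAt_dotProduct_transpose_exp_mul_mul_exp [DecidableEq n]
    (A B : Matrix n n ℝ) (x : n → ℝ) :
    HasDerivAt
      (fun t : ℝ => x ⬝ᵥ ((NormedSpace.exp (t • B))ᵀ * A * NormedSpace.exp (t • B)) *ᵥ x)
      (x ⬝ᵥ (Bᵀ * A + A * B) *ᵥ x) 0 := by
  -- Any matrix norm will do: it induces the product topology, which is all `exp` depends on.
  let _ := Matrix.linftyOpNormedRing (n := n) (α := ℝ)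
  let _ := Matrix.linftyOpNormedAlgebra (n := n) (R := ℝ) (α := ℝ)
  let φ : Matrix n n ℝ →L[ℝ] ℝ := LinearMap.toContinuousLinearMap
    { toFun := fun M => x ⬝ᵥ M *ᵥ x
      map_add' := fun M N => by simp [add_mulVec, dotProduct_add]
      map_smul' := fun c M => by simp [smul_mulVec] }
  have hT (t : ℝ) : (NormedSpace.exp (t • B))ᵀ = NormedSpace.exp (t • Bᵀ) := by
    rw [← exp_transpose, transpose_smul]
  have h := ((hasDerivAt_exp_smul_const (𝕂 := ℝ) Bᵀ 0).mul_const A).mul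
    (hasDerivAt_exp_smul_const (𝕂 := ℝ) B 0)
  simp only [zero_smul, NormedSpace.exp_zero, one_mul, mul_one] at h
  simp only [hT]
  exact φ.hasFDerivAt.comp_hasDerivAt 0 h

end Matrix

theorem posSemidef_of_ellipsoid_balls_increasing_general {d : ℕ}
    (A G : Matrix (Fin d) (Fin d) ℝ)
    (hA : A.PosDef)
    (hmono : ∀ l l' : ℝ, 0 < l' → l' ≤ l →
      {x : Fin d → ℝ |
          x ⬝ᵥ (((NormedSpace.exp (Real.log l' • (-G)))ᵀ * A *
            NormedSpace.exp (Real.log l' • (-G))).mulVec x) ≤ 1}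
        ⊆ {x : Fin d → ℝ |
          x ⬝ᵥ (((NormedSpace.exp (Real.log l • (-G)))ᵀ * A *
            NormedSpace.exp (Real.log l • (-G))).mulVec x) ≤ 1}) :
    (((1 : ℝ) / 2) • (A * G + Gᵀ * A)).PosSemidef := by
  have hderiv (x : Fin d → ℝ) : x ⬝ᵥ ((-G)ᵀ * A + A * -G) *ᵥ x ≤ 0 := by
    refine (hasDerivAt_dotProduct_transpose_exp_mul_mul_exp A (-G) x).nonpos_of_isMaxOn_Ici
      fun t (ht : 0 ≤ t) => ?_
    have hsub := hmono (Real.exp t) 1 one_pos (Real.one_le_exp ht)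
    simp only [Real.log_one, Real.log_exp, zero_smul, NormedSpace.exp_zero, transpose_one,
      one_mul, mul_one] at hsub
    simpa using dotProduct_mulVec_le_of_setOf_subset hsub (by
      simpa using hA.posSemidef.dotProduct_mulVec_nonneg x)
  have hAT : Aᵀ = A := by simpa using hA.1.eq
  have hherm : (A * G + Gᵀ * A).IsHermitian := by
    simpa [hAT] using isHermitian_add_transpose_self (A * G)
  refine (PosSemidef.of_dotProduct_mulVec_nonneg hherm fun x => ?_).smul (by norm_num)
  have h := hderiv x
  simp only [transpose_neg, neg_mul, mul_neg, ← neg_add, neg_mulVec, dotProduct_neg,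
    add_comm (Gᵀ * A)] at h
  simpa using neg_nonpos.mp h

/-- Conversely, if the ellipsoidal balls `B_λ = {x : ⟨x, A_λ x⟩ ≤ 1}`,
with `A_λ = (T_λ⁻¹)ᵀ A T_λ⁻¹` and `T_λ = λ^G`, are increasing in `λ`, then
`sym(A G) = (A G + Gᵀ A)/2` is positive semidefinite. -/
theorem posSemidef_of_ellipsoid_balls_increasing {d : ℕ}
    (A G : Matrix (Fin d) (Fin d) ℝ)
    (hAsym : Aᵀ = A) (hA : A.PosDef)
    (hmono : ∀ l l' : ℝ, 0 < l' → l' ≤ l →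
      {x : Fin d → ℝ |
          x ⬝ᵥ (((NormedSpace.exp (Real.log l' • (-G)))ᵀ * A *
            NormedSpace.exp (Real.log l' • (-G))).mulVec x) ≤ 1}
        ⊆ {x : Fin d → ℝ |
          x ⬝ᵥ (((NormedSpace.exp (Real.log l • (-G)))ᵀ * A *
            NormedSpace.exp (Real.log l • (-G))).mulVec x) ≤ 1}) :
    (((1 : ℝ) / 2) • (A * G + Gᵀ * A)).PosSemidef :=
  posSemidef_of_ellipsoid_balls_increasing_general A G hA hmono
end

section
/- Let F be a σ-finite measure on R^d \ {0} satisfying the scaling property F(T_λ*(E)) = λ⁻¹ F(E) for all λ > 0 and Borel sets E, where T_λ* = λ^{G*} is a dilation group defining a generalized scale ‖·‖. Then under the change of variables y ↦ (‖y‖, u(y)) ∈ R⁺ × ∂B_1, F factors as dF = dΣ(u) ⊗ dλ/λ² for some finite positive measure Σ on ∂B_1, provided F(B_1^c) < ∞. -/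
/-!
Write `u y = (T_{‖y‖})⁻¹ y`. Since `‖T_a y‖ = a ‖y‖` and `u (T_a y) = u y`, the dilation `T_a` maps
`{1 < ‖y‖, u y ∈ B}` onto `{a < ‖y‖, u y ∈ B}`, so the scaling of `F` gives
`F {a < ‖y‖, u y ∈ B} = a⁻¹ Σ B`, where `Σ` is the image under `u` of `F` restricted to `{1 < ‖y‖}`
(finite by assumption, and carried by `∂B₁`). As `a⁻¹ = ∫_a^∞ dλ/λ²`, the image of `F` under
`y ↦ (‖y‖, u y)` agrees with `dλ/λ² ⊗ Σ` on the rectangles `(a, ∞) × B`, `a > 0`, and both vanish on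
`(-∞, c] × B`, `c ≤ 0`. These rectangles form a π-system generating the product σ-algebra, on which
`dλ/λ² ⊗ Σ` is σ-finite.
-/

open Matrix MeasureTheory Set
open scoped ENNReal

noncomputable section

def invSqMeasure : Measure ℝ :=
  ((volume : Measure ℝ).restrict (Ioi 0)).withDensity fun l => ENNReal.ofReal (1 / l ^ 2)

theorem invSqMeasure_Ioi {a : ℝ} (ha : 0 < a) : invSqMeasure (Ioi a) = ENNReal.ofReal a⁻¹ := by
  have hpow : EqOn (fun l : ℝ => ENNReal.ofReal (1 / l ^ 2))
      (fun l => ENNReal.ofReal (l ^ (-2 : ℝ))) (Ioi a) := fun l hl => by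
    dsimp only
    rw [Real.rpow_neg (ha.trans hl).le, Real.rpow_two, one_div]
  rw [invSqMeasure, withDensity_apply _ measurableSet_Ioi,
    Measure.restrict_restrict measurableSet_Ioi, Ioi_inter_Ioi, max_eq_left ha.le,
    setLIntegral_congr_fun measurableSet_Ioi hpow,
    ← ofReal_integral_eq_lintegral_ofReal (integrableOn_Ioi_rpow_of_lt (by norm_num) ha)
      (ae_restrict_of_forall_mem measurableSet_Ioi fun l hl =>
        (Real.rpow_pos_of_pos (ha.trans hl) _).le),
    integral_Ioi_rpow_of_lt (by norm_num) ha]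
  norm_num [Real.rpow_neg_one]

theorem invSqMeasure_Iic {c : ℝ} (hc : c ≤ 0) : invSqMeasure (Iic c) = 0 := by
  rw [invSqMeasure, withDensity_apply _ measurableSet_Iic,
    Measure.restrict_restrict measurableSet_Iic, (Iic_disjoint_Ioi hc).inter_eq,
    Measure.restrict_empty, lintegral_zero_measure]

def radialGenerators : Set (Set ℝ) :=
  {A | ∃ a, 0 < a ∧ A = Ioi a} ∪ {A | ∃ c ≤ 0, A = Iic c}

theorem isPiSystem_radialGenerators : IsPiSystem radialGenerators := by
  rintro _ (⟨a, ha, rfl⟩ | ⟨c, hc, rfl⟩) _ (⟨b, hb, rfl⟩ | ⟨e, he, rfl⟩) ⟨x, hx, hx'⟩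
  · exact Or.inl ⟨a ⊔ b, lt_sup_of_lt_left ha, Ioi_inter_Ioi⟩
  · exfalso; linarith [mem_Ioi.1 hx, mem_Iic.1 hx']
  · exfalso; linarith [mem_Iic.1 hx, mem_Ioi.1 hx']
  · exact Or.inr ⟨c ⊓ e, inf_le_of_left_le hc, Iic_inter_Iic⟩

theorem generateFrom_radialGenerators :
    MeasurableSpace.generateFrom radialGenerators = Real.measurableSpace := by
  refine le_antisymm (MeasurableSpace.generateFrom_le ?_) ?_
  · rintro _ (⟨a, -, rfl⟩ | ⟨c, -, rfl⟩)
    exacts [measurableSet_Ioi, measurableSet_Iic]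
  · rw [BorelSpace.measurable_eq (α := ℝ), borel_eq_generateFrom_Iic]
    refine MeasurableSpace.generateFrom_le ?_
    rintro _ ⟨c, rfl⟩
    rcases le_or_gt c 0 with hc | hc
    · exact MeasurableSpace.measurableSet_generateFrom (Or.inr ⟨c, hc, rfl⟩)
    · rw [← compl_Ioi]
      exact (MeasurableSpace.measurableSet_generateFrom (Or.inl ⟨c, hc, rfl⟩)).compl

def finiteSpanningSetsInRadialGenerators : invSqMeasure.FiniteSpanningSetsIn radialGenerators where
  set n := if n = 0 then Iic 0 else Ioi (n : ℝ)⁻¹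
  set_mem n := by
    split_ifs with hn
    exacts [Or.inr ⟨0, le_rfl, rfl⟩,
      Or.inl ⟨_, inv_pos.2 (Nat.cast_pos.2 (Nat.pos_of_ne_zero hn)), rfl⟩]
  finite n := by
    split_ifs with hn
    · simp [invSqMeasure_Iic le_rfl]
    · rw [invSqMeasure_Ioi (inv_pos.2 (Nat.cast_pos.2 (Nat.pos_of_ne_zero hn)))]
      exact ENNReal.ofReal_lt_top
  spanning := by
    refine eq_univ_of_forall fun x => mem_iUnion.2 ?_
    rcases le_or_gt x 0 with hx | hx
    · exact ⟨0, by simpa using hx⟩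
    · obtain ⟨n, hn⟩ := exists_nat_one_div_lt hx
      exact ⟨n + 1, by simpa [one_div] using hn⟩

theorem invSqMeasure_prod_eq {Y : Type*} [MeasurableSpace Y] (σ : Measure Y) [SigmaFinite σ]
    {μ : Measure (ℝ × Y)} (h_nonpos : μ (Iic 0 ×ˢ univ) = 0)
    (h_Ioi : ∀ a, 0 < a → ∀ B, MeasurableSet B → μ (Ioi a ×ˢ B) = ENNReal.ofReal a⁻¹ * σ B) :
    invSqMeasure.prod σ = μ := by
  refine Measure.prod_eq_generateFrom generateFrom_radialGenerators
    MeasurableSpace.generateFrom_measurableSet isPiSystem_radialGenerators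
    MeasurableSpace.isPiSystem_measurableSet finiteSpanningSetsInRadialGenerators
    σ.toFiniteSpanningSetsIn ?_
  rintro _ (⟨a, ha, rfl⟩ | ⟨c, hc, rfl⟩) B hB
  · rw [h_Ioi a ha B hB, invSqMeasure_Ioi ha]
  · rw [invSqMeasure_Iic hc, zero_mul]
    exact measure_mono_null (prod_mono (Iic_subset_Iic.2 hc) (subset_univ B)) h_nonpos

section Dilation

variable {ι : Type*} [Fintype ι] [DecidableEq ι] {A : Matrix ι ι ℝ} {T : ℝ → Matrix ι ι ℝ}
  {s : (ι → ℝ) → ℝ} {a l : ℝ}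

def IsMatrixRpow (A : Matrix ι ι ℝ) (T : ℝ → Matrix ι ι ℝ) : Prop :=
  ∀ l, 0 < l → T l = NormedSpace.exp (Real.log l • A)

theorem continuous_exp_smul (A : Matrix ι ι ℝ) :
    Continuous fun t : ℝ => NormedSpace.exp (t • A) := by
  open scoped Norms.Operator in
  exact NormedSpace.exp_continuous.comp (continuous_id.smul continuous_const)

theorem IsMatrixRpow.mul (hT : IsMatrixRpow A T) {a b : ℝ} (ha : 0 < a) (hb : 0 < b) :
    T a * T b = T (a * b) := by
  rw [hT a ha, hT b hb, hT _ (mul_pos ha hb), Real.log_mul ha.ne' hb.ne', add_smul,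
    Matrix.exp_add_of_commute _ _ (((Commute.refl A).smul_left _).smul_right _)]

theorem IsMatrixRpow.one (hT : IsMatrixRpow A T) : T 1 = 1 := by
  rw [hT 1 one_pos, Real.log_one, zero_smul, NormedSpace.exp_zero]

theorem IsMatrixRpow.inv (hT : IsMatrixRpow A T) (ha : 0 < a) :
    (T a)⁻¹ = NormedSpace.exp ((-Real.log a) • A) := by
  rw [hT a ha, neg_smul, Matrix.exp_neg]

theorem IsMatrixRpow.inv_eq (hT : IsMatrixRpow A T) (ha : 0 < a) : (T a)⁻¹ = T a⁻¹ := by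
  rw [hT.inv ha, hT _ (inv_pos.2 ha), Real.log_inv]

theorem IsMatrixRpow.inv_mulVec_mulVec (hT : IsMatrixRpow A T) (ha : 0 < a) (x : ι → ℝ) :
    T a⁻¹ *ᵥ (T a *ᵥ x) = x := by
  rw [mulVec_mulVec, hT.mul (inv_pos.2 ha) ha, inv_mul_cancel₀ ha.ne', hT.one, one_mulVec]

theorem IsMatrixRpow.mulVec_inv_mulVec (hT : IsMatrixRpow A T) (ha : 0 < a) (x : ι → ℝ) :
    T a *ᵥ (T a⁻¹ *ᵥ x) = x := by
  rw [mulVec_mulVec, hT.mul ha (inv_pos.2 ha), mul_inv_cancel₀ ha.ne', hT.one, one_mulVec]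

def angularPart (T : ℝ → Matrix ι ι ℝ) (s : (ι → ℝ) → ℝ) (y : ι → ℝ) : ι → ℝ :=
  (T (s y))⁻¹ *ᵥ y

theorem scale_angularPart (hT : IsMatrixRpow A T)
    (hscal : ∀ l, 0 < l → ∀ x, s (T l *ᵥ x) = l * s x) {y : ι → ℝ} (hy : 0 < s y) :
    s (angularPart T s y) = 1 := by
  rw [angularPart, hT.inv_eq hy, hscal _ (inv_pos.2 hy), inv_mul_cancel₀ hy.ne']

theorem angularPart_dilation_mulVec (hT : IsMatrixRpow A T)
    (hscal : ∀ l, 0 < l → ∀ x, s (T l *ᵥ x) = l * s x) (hl : 0 < l) {y : ι → ℝ}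
    (hy : 0 < s y) : angularPart T s (T l *ᵥ y) = angularPart T s y := by
  rw [angularPart, angularPart, hscal l hl, hT.inv_eq (mul_pos hl hy),
    hT.inv_eq hy, _root_.mul_inv_rev, ← hT.mul (inv_pos.2 hy) (inv_pos.2 hl),
    ← mulVec_mulVec, hT.inv_mulVec_mulVec hl]

theorem angularPart_eq_exp (hT : IsMatrixRpow A T)
    (hzero : ∀ y, s y ≤ 0 → y = 0) (y : ι → ℝ) :
    angularPart T s y = NormedSpace.exp ((-Real.log (s y)) • A) *ᵥ y := by
  rcases le_or_gt (s y) 0 with hy | hy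
  · rw [hzero y hy, angularPart, mulVec_zero, mulVec_zero]
  · rw [angularPart, hT.inv hy]

theorem measurable_angularPart (hT : IsMatrixRpow A T)
    (hs : Measurable s) (hzero : ∀ y, s y ≤ 0 → y = 0) : Measurable (angularPart T s) := by
  rw [funext (angularPart_eq_exp hT hzero)]
  have hcont : Continuous fun p : ℝ × (ι → ℝ) => NormedSpace.exp (p.1 • A) *ᵥ p.2 :=
    ((continuous_exp_smul A).comp continuous_fst).matrix_mulVec continuous_snd
  exact hcont.measurable.comp (hs.log.neg.prodMk measurable_id)

theorem image_dilation_one_lt_scale (hT : IsMatrixRpow A T)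
    (hscal : ∀ l, 0 < l → ∀ x, s (T l *ᵥ x) = l * s x) (ha : 0 < a) (B : Set (ι → ℝ)) :
    (T a *ᵥ ·) '' {y | 1 < s y ∧ angularPart T s y ∈ B}
      = {y | a < s y ∧ angularPart T s y ∈ B} := by
  rw [image_eq_preimage_of_inverse (hT.inv_mulVec_mulVec ha)
    (hT.mulVec_inv_mulVec ha)]
  ext y
  simp only [mem_preimage, mem_ofPred_eq, hscal _ (inv_pos.2 ha), ← div_eq_inv_mul,
    one_lt_div ha]
  exact and_congr_right fun hy => by
    rw [angularPart_dilation_mulVec hT hscal (inv_pos.2 ha) (ha.trans hy)]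

theorem measure_lt_scale_eq (hT : IsMatrixRpow A T)
    (hscal : ∀ l, 0 < l → ∀ x, s (T l *ᵥ x) = l * s x) (hs : Measurable s)
    (hu : Measurable (angularPart T s)) {F : Measure (ι → ℝ)}
    (hFscal : ∀ l : ℝ, 0 < l → ∀ E : Set (ι → ℝ), MeasurableSet E →
      F ((fun y => (T l).mulVec y) '' E) = (ENNReal.ofReal l)⁻¹ * F E)
    (ha : 0 < a) {B : Set (ι → ℝ)} (hB : MeasurableSet B) :
    F {y | a < s y ∧ angularPart T s y ∈ B}
      = ENNReal.ofReal a⁻¹ * F {y | 1 < s y ∧ angularPart T s y ∈ B} := by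
  have hE : MeasurableSet {y | 1 < s y ∧ angularPart T s y ∈ B} :=
    (hs measurableSet_Ioi).inter (hu hB)
  rw [← image_dilation_one_lt_scale hT hscal ha B, hFscal a ha _ hE, ENNReal.ofReal_inv_of_pos ha]

end Dilation

end

theorem levy_canonical_measure_factorization_general {d : ℕ}
    (G : Matrix (Fin d) (Fin d) ℝ)
    (T : ℝ → Matrix (Fin d) (Fin d) ℝ)
    (hT : ∀ l : ℝ, 0 < l → T l = NormedSpace.exp (Real.log l • Gᵀ))
    (s : (Fin d → ℝ) → ℝ) (hs : Measurable s)
    (hnonneg : ∀ x, 0 ≤ s x)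
    (hdeg : ∀ x, s x = 0 ↔ x = 0)
    (hscal : ∀ l : ℝ, 0 < l → ∀ x, s ((T l).mulVec x) = l * s x)
    (F : Measure (Fin d → ℝ))
    (hF0 : F {0} = 0)
    (hFscal : ∀ l : ℝ, 0 < l → ∀ E : Set (Fin d → ℝ), MeasurableSet E →
      F ((fun y => (T l).mulVec y) '' E) = (ENNReal.ofReal l)⁻¹ * F E)
    (hFfin : F {x | 1 < s x} < ⊤) :
    ∃ Sig : Measure (Fin d → ℝ), IsFiniteMeasure Sig ∧ Sig {x | s x ≠ 1} = 0 ∧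
      Measure.map (fun y => (s y, (T (s y))⁻¹.mulVec y)) F
        = (((volume : Measure ℝ).restrict (Set.Ioi 0)).withDensity
            (fun l => ENNReal.ofReal (1 / l ^ 2))).prod Sig := by
  show ∃ Sig : Measure (Fin d → ℝ), IsFiniteMeasure Sig ∧ Sig {x | s x ≠ 1} = 0 ∧
    Measure.map (fun y => (s y, angularPart T s y)) F = invSqMeasure.prod Sig
  have hzero : ∀ y, s y ≤ 0 → y = 0 := fun y hy => (hdeg y).1 (le_antisymm hy (hnonneg y))
  have hu : Measurable (angularPart T s) := measurable_angularPart hT hs hzero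
  have : IsFiniteMeasure (F.restrict {y | 1 < s y}) := ⟨by rwa [Measure.restrict_apply_univ]⟩
  refine ⟨(F.restrict {y | 1 < s y}).map (angularPart T s), inferInstance, ?_, ?_⟩
  · have hS : MeasurableSet {x | s x ≠ 1} := (hs (measurableSet_singleton 1)).compl
    rw [Measure.map_apply hu hS, Measure.restrict_apply (hu hS)]
    exact measure_mono_null (fun y hy => hy.1 (scale_angularPart hT hscal (one_pos.trans hy.2)))
      measure_empty
  · refine (invSqMeasure_prod_eq _ ?_ fun a ha B hB => ?_).symm
    · rw [Measure.map_apply (hs.prodMk hu) (measurableSet_Iic.prod MeasurableSet.univ)]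
      exact measure_mono_null (fun y hy => hzero y hy.1) hF0
    · rw [Measure.map_apply (hs.prodMk hu) (measurableSet_Ioi.prod hB), Measure.map_apply hu hB,
        Measure.restrict_apply (hu hB), inter_comm]
      exact measure_lt_scale_eq hT hscal hs hu hFscal ha hB

/-- Let `F` be a σ-finite measure on `ℝ^d \ {0}` satisfying the Lévy
scaling `F (T_λ* E) = λ⁻¹ F E` for all `λ > 0`, where `T_λ* = λ^{Gᵀ}` is a dilation group
defining a generalized scale `s`, and with `F` finite outside the unit ball. Then under
the change of variables `y ↦ (s y, u y)` with `u y = (T_{s y}*)⁻¹ y`, `F` factors as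
`dΣ(u) ⊗ dλ/λ²` for some finite positive measure `Σ` carried by the unit sphere
`∂B₁ = {s = 1}`. -/
theorem levy_canonical_measure_factorization {d : ℕ}
    (G : Matrix (Fin d) (Fin d) ℝ)
    (T : ℝ → Matrix (Fin d) (Fin d) ℝ)
    (hT : ∀ l : ℝ, 0 < l → T l = NormedSpace.exp (Real.log l • Gᵀ))
    (s : (Fin d → ℝ) → ℝ) (hs : Measurable s)
    (hnonneg : ∀ x, 0 ≤ s x)
    (hdeg : ∀ x, s x = 0 ↔ x = 0)
    (hscal : ∀ l : ℝ, 0 < l → ∀ x, s ((T l).mulVec x) = l * s x)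
    (F : Measure (Fin d → ℝ)) [SigmaFinite F]
    (hF0 : F {0} = 0)
    (hFscal : ∀ l : ℝ, 0 < l → ∀ E : Set (Fin d → ℝ), MeasurableSet E →
      F ((fun y => (T l).mulVec y) '' E) = (ENNReal.ofReal l)⁻¹ * F E)
    (hFfin : F {x | 1 < s x} < ⊤) :
    ∃ Sig : Measure (Fin d → ℝ), IsFiniteMeasure Sig ∧ Sig {x | s x ≠ 1} = 0 ∧
      Measure.map (fun y => (s y, (T (s y))⁻¹.mulVec y)) F
        = (((volume : Measure ℝ).restrict (Set.Ioi 0)).withDensity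
            (fun l => ENNReal.ofReal (1 / l ^ 2))).prod Sig :=
  levy_canonical_measure_factorization_general G T hT s hs hnonneg hdeg hscal F hF0 hFscal hFfin
end

section
/- For α ∈ (0,1) ∪ (1,2) and q > 0, the identity ∫_0^∞ (e^{−qr} − 1 + qr·1_{α>1}) α r^{−α−1} dr = −Γ(1−α)·q^α holds (with the convention that the compensating term qr is present only when α > 1), where Γ is the Euler Gamma function analytically continued. -/
/-!
Integrating by parts against `d(-r^{-α}) = α r^{-α-1} dr` turns `∫ φ(r) α r^{-α-1} dr` into
`∫ φ'(r) r^{-α} dr`; the boundary terms vanish because `φ(r) = O(r^a)` at `0` with `a > α` and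
`φ(r) = O(r^b)` at `∞` with `b < α`. For `φ(r) = e^{-r} - 1` (`a = 1`, `b = 0`) the result is
`-Γ(1-α)` by Euler's integral. For `φ(r) = e^{-r} - 1 + r` (`a = 2`, `b = 1`) it is
`∫ (1 - e^{-r}) r^{-α} dr`, the first case at exponent `α - 1`, which gives
`Γ(2-α)/(α-1) = -Γ(1-α)`. The substitution `r ↦ q r` produces the factor `q^α`.
-/

open MeasureTheory Real Set Filter Topology

lemma abs_exp_neg_sub_one_le_self {x : ℝ} (hx : 0 ≤ x) : |exp (-x) - 1| ≤ x := by
  rw [abs_of_nonpos (by simpa using hx)]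
  linarith [add_one_le_exp (-x)]

lemma abs_exp_neg_sub_one_le_one {x : ℝ} (hx : 0 ≤ x) : |exp (-x) - 1| ≤ 1 := by
  rw [abs_of_nonpos (by simpa using hx)]
  linarith [exp_pos (-x)]

lemma abs_exp_neg_sub_one_add_self_le_self {x : ℝ} (hx : 0 ≤ x) : |exp (-x) - 1 + x| ≤ x := by
  rw [abs_of_nonneg (by linarith [add_one_le_exp (-x)])]
  linarith [exp_le_one_iff.mpr (neg_nonpos.mpr hx)]

lemma abs_exp_neg_sub_one_add_self_le_sq {x : ℝ} (hx : |x| ≤ 1) : |exp (-x) - 1 + x| ≤ x ^ 2 := by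
  simpa [sub_neg_eq_add] using abs_exp_sub_one_sub_id_le (x := -x) (by rwa [abs_neg])

section PowerBounds

variable {u : ℝ → ℝ} {a b : ℝ}

lemma integrableOn_Ioi_zero_mul_rpow (hu : ContinuousOn u (Ioi 0)) {β : ℝ}
    (ha : -1 < a + β) (hb : b + β < -1) (h₀ : ∀ x ∈ Ioc 0 1, |u x| ≤ x ^ a)
    (h₁ : ∀ x ∈ Ioi 1, |u x| ≤ x ^ b) :
    IntegrableOn (fun x ↦ u x * x ^ β) (Ioi 0) := by
  have hmeas : AEStronglyMeasurable (fun x ↦ u x * x ^ β) (volume.restrict (Ioi 0)) :=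
    (hu.mul (continuousOn_id.rpow_const fun x hx ↦ Or.inl (ne_of_gt hx))).aestronglyMeasurable
      measurableSet_Ioi
  have hbound : ∀ c, ∀ x, 0 < x → |u x| ≤ x ^ c → ‖u x * x ^ β‖ ≤ x ^ (c + β) := by
    intro c x hx hux
    rw [norm_mul, Real.norm_eq_abs, norm_of_nonneg (rpow_nonneg hx.le _), rpow_add hx]
    exact mul_le_mul_of_nonneg_right hux (rpow_nonneg hx.le _)
  rw [← Ioc_union_Ioi_eq_Ioi zero_le_one, integrableOn_union]
  constructor
  · refine Integrable.mono' ((intervalIntegral.intervalIntegrable_rpow' ha).1) ?_ ?_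
    · exact hmeas.mono_set Ioc_subset_Ioi_self
    · refine (ae_restrict_iff' measurableSet_Ioc).mpr (ae_of_all _ fun x hx ↦ ?_)
      exact hbound a x hx.1 (h₀ x hx)
  · refine Integrable.mono' (integrableOn_Ioi_rpow_of_lt hb one_pos) ?_ ?_
    · exact hmeas.mono_set (Ioi_subset_Ioi zero_le_one)
    · refine (ae_restrict_iff' measurableSet_Ioi).mpr (ae_of_all _ fun x hx ↦ ?_)
      exact hbound b x (one_pos.trans hx) (h₁ x hx)

lemma tendsto_mul_rpow_nhdsGT_zero {γ : ℝ} (ha : 0 < a + γ)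
    (h₀ : ∀ x ∈ Ioc 0 1, |u x| ≤ x ^ a) :
    Tendsto (fun x ↦ u x * x ^ γ) (𝓝[>] 0) (𝓝 0) := by
  have hlim : Tendsto (fun x : ℝ ↦ x ^ (a + γ)) (𝓝[>] 0) (𝓝 0) := by
    simpa [zero_rpow ha.ne'] using
      (continuousAt_rpow_const 0 _ (Or.inr ha.le)).tendsto.mono_left nhdsWithin_le_nhds
  refine squeeze_zero_norm' ?_ hlim
  filter_upwards [Ioc_mem_nhdsGT zero_lt_one] with x hx
  rw [norm_mul, Real.norm_eq_abs, norm_of_nonneg (rpow_nonneg hx.1.le _), rpow_add hx.1]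
  exact mul_le_mul_of_nonneg_right (h₀ x hx) (rpow_nonneg hx.1.le _)

lemma tendsto_mul_rpow_atTop {γ : ℝ} (hb : b + γ < 0) (h₁ : ∀ x ∈ Ioi 1, |u x| ≤ x ^ b) :
    Tendsto (fun x ↦ u x * x ^ γ) atTop (𝓝 0) := by
  have hlim : Tendsto (fun x : ℝ ↦ x ^ (b + γ)) atTop (𝓝 0) := by
    simpa using tendsto_rpow_neg_atTop (neg_pos.mpr hb)
  refine squeeze_zero_norm' ?_ hlim
  filter_upwards [eventually_gt_atTop 1] with x hx
  have hx₀ : 0 < x := one_pos.trans hx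
  rw [norm_mul, Real.norm_eq_abs, norm_of_nonneg (rpow_nonneg hx₀.le _), rpow_add hx₀]
  exact mul_le_mul_of_nonneg_right (h₁ x hx) (rpow_nonneg hx₀.le _)

lemma integral_mul_rpow_neg_sub_one_eq_integral_deriv_mul_rpow_neg {u' : ℝ → ℝ} {α : ℝ}
    (hu : ∀ x ∈ Ioi 0, HasDerivAt u (u' x) x) (ha : α < a) (hb : b < α)
    (h₀ : ∀ x ∈ Ioc 0 1, |u x| ≤ x ^ a) (h₁ : ∀ x ∈ Ioi 1, |u x| ≤ x ^ b)
    (hu' : IntegrableOn (fun x ↦ u' x * x ^ (-α)) (Ioi 0)) :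
    ∫ x in Ioi 0, u x * (α * x ^ (-α - 1)) = ∫ x in Ioi 0, u' x * x ^ (-α) := by
  have hv : ∀ x ∈ Ioi (0 : ℝ), HasDerivAt (fun x ↦ -x ^ (-α)) (α * x ^ (-α - 1)) x := fun x hx ↦
    by simpa using (hasDerivAt_rpow_const (p := -α) (Or.inl (ne_of_gt hx))).fun_neg
  have huv' : IntegrableOn (fun x ↦ u x * (α * x ^ (-α - 1))) (Ioi 0) := by
    simpa only [IntegrableOn, mul_left_comm α] using
      (integrableOn_Ioi_zero_mul_rpow (β := -α - 1)
        (fun x hx ↦ (hu x hx).continuousAt.continuousWithinAt) (by linarith) (by linarith)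
        h₀ h₁).const_mul α
  have h_zero : Tendsto (fun x ↦ u x * -x ^ (-α)) (𝓝[>] 0) (𝓝 0) := by
    simpa using (tendsto_mul_rpow_nhdsGT_zero (by linarith) h₀).neg
  have h_infty : Tendsto (fun x ↦ u x * -x ^ (-α)) atTop (𝓝 0) := by
    simpa using (tendsto_mul_rpow_atTop (by linarith) h₁).neg
  rw [integral_Ioi_mul_deriv_eq_deriv_mul hu hv huv' (by simpa [Pi.mul_def] using hu'.neg)
    h_zero h_infty]
  simp [integral_neg]

end PowerBounds

lemma integral_exp_neg_sub_one_mul_rpow {α : ℝ} (h₀ : 0 < α) (h₁ : α < 1) :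
    ∫ x in Ioi 0, (exp (-x) - 1) * (α * x ^ (-α - 1)) = -Gamma (1 - α) := by
  have hexp : ∀ x ∈ Ioi (0 : ℝ), HasDerivAt (fun x ↦ exp (-x) - 1) (-exp (-x)) x := fun x _ ↦
    by simpa using ((hasDerivAt_neg x).exp).sub_const 1
  have hΓ : ∀ x : ℝ, exp (-x) * x ^ (1 - α - 1) = exp (-x) * x ^ (-α) := fun x ↦ by ring_nf
  rw [integral_mul_rpow_neg_sub_one_eq_integral_deriv_mul_rpow_neg hexp (a := 1) (b := 0)
      h₁ h₀ (fun x hx ↦ by simpa using abs_exp_neg_sub_one_le_self hx.1.le)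
      (fun x hx ↦ by simpa using abs_exp_neg_sub_one_le_one (zero_le_one.trans hx.le))
      (by simpa [hΓ] using (GammaIntegral_convergent (s := 1 - α) (by linarith)).neg),
    Gamma_eq_integral (by linarith)]
  simp [integral_neg]

lemma integral_exp_neg_sub_one_add_self_mul_rpow {α : ℝ} (h₁ : 1 < α) (h₂ : α < 2) :
    ∫ x in Ioi 0, (exp (-x) - 1 + x) * (α * x ^ (-α - 1)) = -Gamma (1 - α) := by
  have hu : ∀ x ∈ Ioi (0 : ℝ), HasDerivAt (fun x ↦ exp (-x) - 1 + x) (1 - exp (-x)) x :=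
    fun x _ ↦ by simpa [sub_eq_neg_add, add_comm] using
      (((hasDerivAt_neg x).exp).sub_const 1).fun_add (hasDerivAt_id' x)
  have hu' : IntegrableOn (fun x ↦ (1 - exp (-x)) * x ^ (-α)) (Ioi 0) :=
    integrableOn_Ioi_zero_mul_rpow (a := 1) (b := 0) (by fun_prop) (by linarith) (by linarith)
      (fun x hx ↦ by simpa [abs_sub_comm] using abs_exp_neg_sub_one_le_self hx.1.le)
      (fun x hx ↦ by
        simpa [abs_sub_comm] using abs_exp_neg_sub_one_le_one (zero_le_one.trans hx.le))
  -- `1 - e^{-x}` against `x^{-α}` is the case `α - 1 ∈ (0, 1)` of the previous lemma.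
  have hshift : ∀ x : ℝ, (1 - exp (-x)) * x ^ (-α)
      = -(α - 1)⁻¹ * ((exp (-x) - 1) * ((α - 1) * x ^ (-(α - 1) - 1))) := fun x ↦ by
    rw [show -(α - 1) - 1 = -α by ring]
    field_simp [show α - 1 ≠ 0 by linarith]
    ring
  rw [integral_mul_rpow_neg_sub_one_eq_integral_deriv_mul_rpow_neg hu (a := 2) (b := 1) h₂ h₁
      (fun x hx ↦ by
        rw [rpow_two]
        exact abs_exp_neg_sub_one_add_self_le_sq (by rw [abs_of_pos hx.1]; exact hx.2))
      (fun x hx ↦ by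
        simpa using abs_exp_neg_sub_one_add_self_le_self (zero_le_one.trans hx.le)) hu',
    funext hshift, integral_const_mul,
    integral_exp_neg_sub_one_mul_rpow (by linarith) (by linarith),
    show 1 - (α - 1) = (1 - α) + 1 by ring, Gamma_add_one (by linarith)]
  field_simp [show α - 1 ≠ 0 by linarith]
  ring

lemma setIntegral_Ioi_comp_mul_left_mul_rpow (φ : ℝ → ℝ) {q : ℝ} (hq : 0 < q) (c β : ℝ) :
    ∫ r in Ioi 0, φ (q * r) * (c * r ^ β) = q ^ (-β - 1) * ∫ x in Ioi 0, φ x * (c * x ^ β) := by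
  have hpow : ∀ r ∈ Ioi (0 : ℝ),
      φ (q * r) * (c * r ^ β) = q ^ (-β) * (φ (q * r) * (c * (q * r) ^ β)) := fun r hr ↦ by
    rw [mul_rpow hq.le (le_of_lt hr), rpow_neg hq.le]
    field_simp [(rpow_pos_of_pos hq β).ne']
  rw [setIntegral_congr_fun measurableSet_Ioi hpow, integral_const_mul,
    integral_comp_mul_left_Ioi (fun x ↦ φ x * (c * x ^ β)) 0 hq, mul_zero, smul_eq_mul,
    ← mul_assoc, rpow_sub_one hq.ne', div_eq_mul_inv]

/-- For `α ∈ (0,1) ∪ (1,2)` and `q > 0`,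
`∫_0^∞ (e^{-qr} - 1 + qr·1_{α>1}) α r^{-α-1} dr = -Γ(1-α) q^α`, where the compensating
term `qr` is present only when `α > 1` and `Γ` is the Euler Gamma function (analytically
continued). -/
theorem extremal_stable_laplace_exponent (α : ℝ)
    (hα : α ∈ Set.Ioo (0 : ℝ) 1 ∪ Set.Ioo (1 : ℝ) 2) (q : ℝ) (hq : 0 < q) :
    ∫ r in Set.Ioi (0 : ℝ),
        (Real.exp (-(q * r)) - 1 + (if 1 < α then q * r else 0)) * (α * r ^ (-α - 1))
      = -Real.Gamma (1 - α) * q ^ α := by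
  rw [setIntegral_Ioi_comp_mul_left_mul_rpow (fun x ↦ exp (-x) - 1 + if 1 < α then x else 0) hq,
    show -(-α - 1) - 1 = α by ring]
  rcases hα with ⟨h₀, h₁⟩ | ⟨h₁, h₂⟩
  · simp only [if_neg h₁.not_gt, add_zero]
    rw [integral_exp_neg_sub_one_mul_rpow h₀ h₁]
    ring
  · simp only [if_pos h₁]
    rw [integral_exp_neg_sub_one_add_self_mul_rpow h₁ h₂]
    ring
end
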